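/- arXiv:2602.11867 — 2 statements merged into one kernel-verified Lean document; each statement's English description precedes it below -/
import Mathlib

section
/- Let a, p be positive integers with n = p·a, and suppose n is odd (equivalently n − 2p is odd, so that the genus of the passport [a^p, a^p, n] is an integer). Then there exist permutations x, y of Fin n such that every orbit of x has size a, every orbit of y has size a, x*y is an n-cycle, and the subgroup of Equiv.Perm (Fin n) generated by x and y has cardinality n, if and only if p = 1 (equivalently a = n). That is, the passport [a^p, a^p, n] admits a regular dessin if and only if p = 1. -/
/-- The orbit of `e` under the permutation `σ`: `{σ^k e : k ∈ ℤ}`. -/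
def permOrbit {E : Type*} (σ : Equiv.Perm E) (e : E) : Set E :=
  {f | ∃ k : ℤ, (σ ^ k) e = f}

/-- Every orbit of `σ` has exactly `a` elements. -/
def allOrbitsSize {E : Type*} (σ : Equiv.Perm E) (a : ℕ) : Prop :=
  ∀ e : E, (permOrbit σ e).ncard = a

/-!
If `x`, `y` have order `a`, `x * y` has order `n = p * a`, and `⟨x, y⟩` has only
`n` elements, then `⟨x, y⟩ = ⟨x * y⟩` is cyclic, so `x` and `y` commute and
`(x * y) ^ a = x ^ a * y ^ a = 1`; hence `p * a ∣ a` and `p = 1`. Conversely, for `p = 1` take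
`x = y` the rotation of `Fin n`: its square is again an `n`-cycle because `n` is odd.
-/

section PermOrbit

variable {E : Type*}

lemma permOrbit_eq_orbit_zpowers (σ : Equiv.Perm E) (e : E) :
    permOrbit σ e = MulAction.orbit (Subgroup.zpowers σ) e := by
  ext f
  constructor
  · rintro ⟨k, rfl⟩
    exact ⟨⟨σ ^ k, Subgroup.zpow_mem_zpowers σ k⟩, rfl⟩
  · rintro ⟨⟨g, hg⟩, rfl⟩
    obtain ⟨k, rfl⟩ := Subgroup.mem_zpowers_iff.mp hg
    exact ⟨k, rfl⟩

lemma ncard_permOrbit [Finite E] (σ : Equiv.Perm E) (e : E) :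
    (permOrbit σ e).ncard = Function.minimalPeriod σ e := by
  have := Fintype.ofFinite (MulAction.orbit (Subgroup.zpowers σ) e)
  rw [permOrbit_eq_orbit_zpowers, ← Nat.card_coe_set_eq, Nat.card_eq_fintype_card,
    ← MulAction.minimalPeriod_eq_card]
  rfl

lemma allOrbitsSize_iff_minimalPeriod [Finite E] {σ : Equiv.Perm E} {a : ℕ} :
    allOrbitsSize σ a ↔ ∀ e, Function.minimalPeriod σ e = a := by
  simp only [allOrbitsSize, ncard_permOrbit]

lemma allOrbitsSize.pow [Finite E] {σ : Equiv.Perm E} {a k : ℕ} (hσ : allOrbitsSize σ a)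
    (hk : k.Coprime a) : allOrbitsSize (σ ^ k) a := by
  rw [allOrbitsSize_iff_minimalPeriod] at hσ ⊢
  intro e
  rw [Equiv.Perm.coe_pow, Function.minimalPeriod_iterate_eq_div_gcd'
    (σ.injective.mem_periodicPts e), hσ, hk.symm.gcd_eq_one, Nat.div_one]

lemma allOrbitsSize.orderOf_eq [Finite E] [Nonempty E] {σ : Equiv.Perm E} {a : ℕ}
    (hσ : allOrbitsSize σ a) : orderOf σ = a := by
  rw [allOrbitsSize_iff_minimalPeriod] at hσ
  have hpow : σ ^ a = 1 := by
    ext e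
    rw [Equiv.Perm.coe_pow, ← hσ e, Function.iterate_minimalPeriod, Equiv.Perm.one_apply]
  obtain ⟨e⟩ := ‹Nonempty E›
  refine Nat.dvd_antisymm (orderOf_dvd_of_pow_eq_one hpow) ?_
  rw [← hσ e]
  exact MulAction.period_dvd_orderOf σ e

lemma allOrbitsSize_finRotate (n : ℕ) : allOrbitsSize (finRotate n) n := by
  intro i
  have := i.neZero
  have huniv : permOrbit (finRotate n) i = Set.univ := by
    refine Set.eq_univ_of_forall fun j => ⟨(j - i).val, ?_⟩
    rw [zpow_natCast, Equiv.Perm.coe_pow, ← finCycle_eq_finRotate_iterate, finCycle_apply,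
      add_sub_cancel]
  rw [huniv, Set.ncard_univ, Nat.card_eq_fintype_card, Fintype.card_fin]

end PermOrbit

section Group

variable {G : Type*} [Group G]

lemma commute_of_card_closure_pair_le_orderOf_mul [Finite G] {x y : G}
    (hcard : Nat.card (Subgroup.closure {x, y}) ≤ orderOf (x * y)) : Commute x y := by
  have hle : Subgroup.zpowers (x * y) ≤ Subgroup.closure {x, y} :=
    Subgroup.zpowers_le.mpr <|
      mul_mem (Subgroup.subset_closure (by simp)) (Subgroup.subset_closure (by simp))
  have hcyclic : Subgroup.zpowers (x * y) = Subgroup.closure {x, y} :=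
    Subgroup.eq_of_le_of_card_ge hle (by rwa [Nat.card_zpowers])
  have hx : x ∈ Subgroup.zpowers (x * y) := hcyclic ▸ Subgroup.subset_closure (by simp)
  have hcomm : Commute x (x * y) := by
    obtain ⟨k, hk⟩ := Subgroup.mem_zpowers_iff.mp hx
    simpa only [hk] using Commute.zpow_self (x * y) k
  exact mul_left_cancel (a := x) (by simpa only [mul_assoc] using hcomm.eq)

lemma eq_one_of_card_closure_pair_le_orderOf_mul [Finite G] {x y : G} {a p : ℕ} (ha : a ≠ 0)
    (hx : x ^ a = 1) (hy : y ^ a = 1) (hxy : orderOf (x * y) = p * a)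
    (hcard : Nat.card (Subgroup.closure {x, y}) ≤ orderOf (x * y)) : p = 1 := by
  have hcomm := commute_of_card_closure_pair_le_orderOf_mul hcard
  have hdvd : p * a ∣ 1 * a := by
    rw [one_mul, ← hxy, orderOf_dvd_iff_pow_eq_one, hcomm.mul_pow, hx, hy, one_mul]
  exact Nat.dvd_one.mp ((mul_dvd_mul_iff_right ha).mp hdvd)

end Group

theorem passport_ap_ap_n_regular_iff_general (a p n : ℕ) (hn : n = p * a) (hodd : Odd n) :
    (∃ x y : Equiv.Perm (Fin n),
      allOrbitsSize x a ∧ allOrbitsSize y a ∧ allOrbitsSize (x * y) n ∧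
      Nat.card (Subgroup.closure ({x, y} : Set (Equiv.Perm (Fin n)))) = n) ↔ p = 1 := by
  have : Nonempty (Fin n) := ⟨⟨0, hodd.pos⟩⟩
  constructor
  · rintro ⟨x, y, hx, hy, hxy, hcard⟩
    have ha : a ≠ 0 := by rintro rfl; simp [hn] at hodd
    have hord : orderOf (x * y) = n := hxy.orderOf_eq
    exact eq_one_of_card_closure_pair_le_orderOf_mul ha (hx.orderOf_eq ▸ pow_orderOf_eq_one x)
      (hy.orderOf_eq ▸ pow_orderOf_eq_one y) (hord.trans hn) (hcard.trans hord.symm).le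
  · rintro rfl
    rw [one_mul] at hn
    subst hn
    refine ⟨finRotate n, finRotate n, allOrbitsSize_finRotate n, allOrbitsSize_finRotate n, ?_, ?_⟩
    · rw [← sq]
      exact (allOrbitsSize_finRotate n).pow (Nat.coprime_two_left.mpr hodd)
    · rw [Set.pair_eq_singleton, ← Subgroup.zpowers_eq_closure, Nat.card_zpowers,
        (allOrbitsSize_finRotate n).orderOf_eq]

/-- The passport `[a^p, a^p, n]` admits a regular dessin iff `p = 1`. -/
theorem passport_ap_ap_n_regular_iff (a p n : ℕ) (ha : 0 < a) (hp : 0 < p)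
    (hn : n = p * a) (hodd : Odd n) :
    (∃ x y : Equiv.Perm (Fin n),
      allOrbitsSize x a ∧ allOrbitsSize y a ∧ allOrbitsSize (x * y) n ∧
      Nat.card (Subgroup.closure ({x, y} : Set (Equiv.Perm (Fin n)))) = n) ↔ p = 1 :=
  passport_ap_ap_n_regular_iff_general a p n hn hodd
end

section
/- Let n, a, b, c, p, q, r be positive integers with n = p·a = q·b = r·c and p + q + r = n (genus 1). Then the following are equivalent: (1) a < n, b < n and c < n (the passport [a^p, b^q, c^r] contains no part of type n^1); (2) there exist permutations x, y of Fin n such that every orbit of x has size a, every orbit of y has size b, every orbit of (x*y)⁻¹ has size c, the subgroup G of Equiv.Perm (Fin n) generated by x and y acts transitively on Fin n, and Fintype.card G ≠ n. That is, a uniform passport of genus 1 admits a non-regular dessin if and only if it does not contain an element of type n^1. -/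
open Equiv Function Subgroup

section OrbitSizes
variable {α β : Type*}

theorem ncard_permOrbit_s9 (σ : Perm α) (e : α) : (permOrbit σ e).ncard = minimalPeriod σ e := by
  have : permOrbit σ e = MulAction.orbit (zpowers σ) e := by
    ext f
    simp only [permOrbit, MulAction.mem_orbit_iff, Subtype.exists, mem_zpowers_iff]
    exact ⟨fun ⟨k, hk⟩ => ⟨_, ⟨k, rfl⟩, hk⟩, fun ⟨_, ⟨k, rfl⟩, hk⟩ => ⟨k, hk⟩⟩
  rw [← Nat.card_coe_set_eq, this, Nat.card_congr (MulAction.orbitZPowersEquiv σ e),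
    Nat.card_zmod]
  rfl

theorem allOrbitsSize_iff_minimalPeriod_s9 {σ : Perm α} {d : ℕ} :
    allOrbitsSize σ d ↔ ∀ e, minimalPeriod σ e = d := by
  simp only [allOrbitsSize, ncard_permOrbit_s9]

theorem Equiv.Perm.minimalPeriod_eq_iff [Finite α] {σ : Perm α} {e : α} {d : ℕ} :
    minimalPeriod σ e = d ↔ 0 < d ∧ (σ ^ d) e = e ∧ ∀ k < d, 0 < k → (σ ^ k) e ≠ e := by
  simp only [← Perm.iterate_eq_pow]
  constructor
  · rintro rfl
    have hper : IsPeriodicPt σ (orderOf σ) e := by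
      simp [IsPeriodicPt, IsFixedPt, Perm.iterate_eq_pow, pow_orderOf_eq_one]
    exact ⟨hper.minimalPeriod_pos (orderOf_pos σ), isPeriodicPt_minimalPeriod σ e,
      fun k hk hk0 hp => hk0.ne' (IsPeriodicPt.eq_zero_of_lt_minimalPeriod hp hk)⟩
  · rintro ⟨hd, hper, hmin⟩
    by_contra hne
    exact hmin _ (lt_of_le_of_ne (IsPeriodicPt.minimalPeriod_le hd hper) hne)
      (IsPeriodicPt.minimalPeriod_pos hd hper) (isPeriodicPt_minimalPeriod σ e)

instance decidableAllOrbitsSize [Fintype α] [DecidableEq α] (σ : Perm α) (d : ℕ) :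
    Decidable (allOrbitsSize σ d) :=
  decidable_of_iff _ (allOrbitsSize_iff_minimalPeriod_s9.trans
    (forall_congr' fun _ => Perm.minimalPeriod_eq_iff)).symm

theorem allOrbitsSize_inv {σ : Perm α} {d : ℕ} : allOrbitsSize σ⁻¹ d ↔ allOrbitsSize σ d := by
  have (e : α) : permOrbit σ⁻¹ e = permOrbit σ e := Set.ext fun _ => Perm.sameCycle_inv
  simp only [allOrbitsSize, this]

theorem permOrbit_permCongrHom (e : α ≃ β) (σ : Perm α) (x : α) :
    permOrbit (e.permCongrHom σ) (e x) = e '' permOrbit σ x := by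
  ext f
  simp only [permOrbit, Set.mem_ofPred_eq, Set.mem_image, ← map_zpow]
  simp [Equiv.permCongrHom_coe]

theorem allOrbitsSize_permCongrHom (e : α ≃ β) {σ : Perm α} {d : ℕ} :
    allOrbitsSize (e.permCongrHom σ) d ↔ allOrbitsSize σ d := by
  simp only [allOrbitsSize, e.surjective.forall, permOrbit_permCongrHom,
    Set.ncard_image_of_injective _ e.injective]

end OrbitSizes

theorem Subgroup.mem_closure_pair_left {G : Type*} [Group G] (x y : G) : x ∈ closure {x, y} :=
  subset_closure (Set.mem_insert x _)

theorem Subgroup.mem_closure_pair_right {G : Type*} [Group G] (x y : G) : y ∈ closure {x, y} :=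
  subset_closure (Set.mem_insert_of_mem x rfl)

theorem card_ne_of_fixes_of_moves {α : Type*} [Finite α] {H : Subgroup (Perm α)}
    (htrans : ∀ e f : α, ∃ g ∈ H, g e = f) {g : Perm α} (hg : g ∈ H) {e e' : α}
    (hfix : g e = e) (hmove : g e' ≠ e') : Nat.card H ≠ Nat.card α := by
  intro hcard
  have hsurj : Surjective fun h : H => (h : Perm α) e := fun f =>
    let ⟨h, hH, hf⟩ := htrans e f; ⟨⟨h, hH⟩, hf⟩
  have : (⟨g, hg⟩ : H) = 1 := (hsurj.bijective_of_nat_card_le hcard.le).injective hfix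
  exact hmove (by simp [show g = 1 from congrArg Subtype.val this])

section Dessin
variable {α β : Type*}

def IsNonregularDessin (x y : Perm α) (a b c : ℕ) : Prop :=
  allOrbitsSize x a ∧ allOrbitsSize y b ∧ allOrbitsSize (x * y)⁻¹ c ∧
    (∀ e f : α, ∃ g ∈ closure ({x, y} : Set (Perm α)), g e = f) ∧
    Nat.card (closure ({x, y} : Set (Perm α))) ≠ Nat.card α

def HasNonregularDessin (n a b c : ℕ) : Prop :=
  ∃ x y : Perm (Fin n), IsNonregularDessin x y a b c

namespace IsNonregularDessin
variable {x y : Perm α} {a b c : ℕ}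

theorem permCongrHom (e : α ≃ β) (h : IsNonregularDessin x y a b c) :
    IsNonregularDessin (e.permCongrHom x) (e.permCongrHom y) a b c := by
  obtain ⟨hx, hy, hxy, htrans, hcard⟩ := h
  have hcl : closure {e.permCongrHom x, e.permCongrHom y} =
      (closure {x, y}).map e.permCongrHom.toMonoidHom := by
    rw [MonoidHom.map_closure, Set.image_pair]
    rfl
  refine ⟨(allOrbitsSize_permCongrHom e).2 hx, (allOrbitsSize_permCongrHom e).2 hy, ?_, ?_, ?_⟩
  · rw [← map_mul, ← map_inv]
    exact (allOrbitsSize_permCongrHom e).2 hxy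
  · intro f f'
    obtain ⟨g, hg, hgf⟩ := htrans (e.symm f) (e.symm f')
    exact ⟨e.permCongrHom g, hcl ▸ mem_map_of_mem _ hg, by simp [Equiv.permCongrHom_coe, hgf]⟩
  · rwa [hcl, card_map_of_injective e.permCongrHom.injective, ← Nat.card_congr e]

theorem hasNonregularDessin [Finite α] {n : ℕ} (h : IsNonregularDessin x y a b c)
    (hn : Nat.card α = n) : HasNonregularDessin n a b c :=
  ⟨_, _, h.permCongrHom (Finite.equivFinOfCardEq hn)⟩

theorem of_closure_eq {x' y' : Perm α} {a' b' c' : ℕ} (h : IsNonregularDessin x y a b c)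
    (hcl : closure {x', y'} = closure ({x, y} : Set (Perm α))) (hx : allOrbitsSize x' a')
    (hy : allOrbitsSize y' b') (hxy : allOrbitsSize (x' * y')⁻¹ c') :
    IsNonregularDessin x' y' a' b' c' :=
  ⟨hx, hy, hxy, hcl ▸ h.2.2.2.1, hcl ▸ h.2.2.2.2⟩

theorem rotate (h : IsNonregularDessin x y a b c) : IsNonregularDessin y (x * y)⁻¹ b c a := by
  have hx : x ∈ closure {y, (x * y)⁻¹} := by
    simpa using mul_mem (inv_mem (mem_closure_pair_right y (x * y)⁻¹))
      (inv_mem (mem_closure_pair_left y (x * y)⁻¹))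
  refine h.of_closure_eq (le_antisymm ?_ ?_) h.2.1 h.2.2.1 (by simpa using h.1)
  · rw [closure_le, Set.insert_subset_iff, Set.singleton_subset_iff]
    exact ⟨mem_closure_pair_right x y,
      inv_mem (mul_mem (mem_closure_pair_left x y) (mem_closure_pair_right x y))⟩
  · rw [closure_le, Set.insert_subset_iff, Set.singleton_subset_iff]
    exact ⟨hx, mem_closure_pair_left y _⟩

theorem swap (h : IsNonregularDessin x y a b c) : IsNonregularDessin y⁻¹ x⁻¹ b a c := by
  refine h.of_closure_eq ?_ (allOrbitsSize_inv.2 h.2.1) (allOrbitsSize_inv.2 h.1) ?_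
  · rw [← Set.inv_singleton, ← Set.inv_insert, closure_inv, Set.pair_comm]
  · rw [← mul_inv_rev, inv_inv]
    exact allOrbitsSize_inv.1 h.2.2.1

end IsNonregularDessin

theorem HasNonregularDessin.rotate {n a b c : ℕ} (h : HasNonregularDessin n a b c) :
    HasNonregularDessin n b c a :=
  let ⟨_, _, h⟩ := h; ⟨_, _, h.rotate⟩

theorem HasNonregularDessin.swap {n a b c : ℕ} (h : HasNonregularDessin n a b c) :
    HasNonregularDessin n b a c :=
  let ⟨_, _, h⟩ := h; ⟨_, _, h.swap⟩

end Dessin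

section ShiftPerm
variable {K m : ℕ}

def shiftPerm (δ : ZMod K) (F : ZMod K → ℤ) : Perm (ZMod K × ZMod m) where
  toFun e := (e.1 + δ, e.2 + F e.1)
  invFun e := (e.1 - δ, e.2 - F (e.1 - δ))
  left_inv e := by simp
  right_inv e := by simp

@[simp]
theorem shiftPerm_apply (δ : ZMod K) (F : ZMod K → ℤ) (e : ZMod K × ZMod m) :
    shiftPerm δ F e = (e.1 + δ, e.2 + F e.1) :=
  rfl

theorem shiftPerm_mul (δ δ' : ZMod K) (F F' : ZMod K → ℤ) :
    shiftPerm (m := m) δ F * shiftPerm δ' F' =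
      shiftPerm (δ' + δ) fun j => F' j + F (j + δ') := by
  ext e <;> simp [add_assoc]

theorem shiftPerm_pow (δ : ZMod K) (F : ZMod K → ℤ) (k : ℕ) :
    shiftPerm (m := m) δ F ^ k =
      shiftPerm (k • δ) fun j => ∑ t ∈ Finset.range k, F (j + t • δ) := by
  induction k with
  | zero => ext e <;> simp
  | succ k ih =>
    rw [pow_succ, ih, shiftPerm_mul]
    congr 1
    · rw [succ_nsmul, add_comm]
    · funext j
      rw [Finset.sum_range_succ', add_comm]
      simp only [zero_smul, add_zero, succ_nsmul', add_assoc]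

theorem allOrbitsSize_shiftPerm {δ : ZMod K} {F : ZMod K → ℤ} {d : ℕ} (hδ : addOrderOf δ = d)
    (hF : ∀ j, ∑ t ∈ Finset.range d, F (j + t • δ) = 0) :
    allOrbitsSize (shiftPerm (m := m) δ F) d := by
  refine allOrbitsSize_iff_minimalPeriod_s9.2 fun e => Nat.dvd_antisymm ?_ ?_
  · apply IsPeriodicPt.minimalPeriod_dvd
    rw [IsPeriodicPt, IsFixedPt, Perm.iterate_eq_pow, shiftPerm_pow, ← hδ,
      addOrderOf_nsmul_eq_zero, hδ]
    simp only [shiftPerm_apply, hF, Int.cast_zero, add_zero]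
  · have h := congrArg Prod.fst (isPeriodicPt_minimalPeriod (shiftPerm (m := m) δ F) e)
    rw [Perm.iterate_eq_pow, shiftPerm_pow] at h
    exact hδ ▸ addOrderOf_dvd_of_nsmul_eq_zero (by simpa using h)

theorem exists_mem_apply_eq_of_shiftPerm_mem [NeZero K] [NeZero m]
    {H : Subgroup (Perm (ZMod K × ZMod m))} {F G : ZMod K → ℤ} {j₀ : ZMod K}
    (hσ : shiftPerm 1 F ∈ H) (hτ : shiftPerm 0 G ∈ H) (hG : G j₀ = 1) (e f : ZMod K × ZMod m) :
    ∃ g ∈ H, g e = f := by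
  suffices hreach : ∀ e, ∃ g ∈ H, g e = (j₀, 0) by
    obtain ⟨g, hg, hge⟩ := hreach e
    obtain ⟨g', hg', hg'f⟩ := hreach f
    exact ⟨g'⁻¹ * g, mul_mem (inv_mem hg') hg,
      by rw [Perm.mul_apply, hge, Perm.inv_eq_iff_eq, hg'f]⟩
  rintro ⟨j, u⟩
  obtain ⟨u', hu'⟩ : ∃ u', (shiftPerm 1 F ^ (j₀ - j).val) (j, u) = (j₀, u') :=
    ⟨_, Prod.ext (by simp [shiftPerm_pow]) rfl⟩
  refine ⟨shiftPerm 0 G ^ (-u').val * shiftPerm 1 F ^ (j₀ - j).val,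
    mul_mem (pow_mem hτ _) (pow_mem hσ _), ?_⟩
  rw [Perm.mul_apply, hu', shiftPerm_pow]
  simp [hG]

theorem IsNonregularDessin.of_shiftPerm_mem [NeZero K] (hm : 1 < m)
    {x y : Perm (ZMod K × ZMod m)} {a b c : ℕ} (hx : allOrbitsSize x a) (hy : allOrbitsSize y b)
    (hxy : allOrbitsSize (x * y) c) {F G : ZMod K → ℤ} {j₀ j₁ : ZMod K}
    (hσ : shiftPerm 1 F ∈ closure {x, y}) (hτ : shiftPerm 0 G ∈ closure {x, y})
    (hG₀ : G j₀ = 1) (hG₁ : G j₁ = 0) : IsNonregularDessin x y a b c := by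
  have : NeZero m := ⟨by omega⟩
  have : Fact (1 < m) := ⟨hm⟩
  have htrans := exists_mem_apply_eq_of_shiftPerm_mem hσ hτ hG₀
  refine ⟨hx, hy, allOrbitsSize_inv.2 hxy, htrans,
    card_ne_of_fixes_of_moves htrans hτ (e := (j₁, 0)) (e' := (j₀, 0)) ?_ ?_⟩ <;>
    simp [hG₀, hG₁]

end ShiftPerm

section Families
variable {m : ℕ}

/- Each vector lists the first coordinates of `ζ ^ j`, `j < K`, in a `ℤ`-basis `(1, ω)` of `ℤ[ζ]`,
where `ζ` is a primitive `K`-th root of unity and `ω = ζ` for `K = 3, 4`, `ω = ζ ^ 2` for `K = 6`.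
It is indexed by `Fin K`; the binder `j : ZMod K` lets it be read as a function on `ZMod K`. -/
theorem isNonregularDessin_333 (hm : 1 < m) :
    IsNonregularDessin (shiftPerm (m := m) 1 0) (shiftPerm 1 fun j : ZMod 3 => ![1, 0, -1] j)
      3 3 3 := by
  set x : Perm (ZMod 3 × ZMod m) := shiftPerm 1 0
  set y : Perm (ZMod 3 × ZMod m) := shiftPerm 1 fun j : ZMod 3 => ![1, 0, -1] j
  have hτ : y * x * x = shiftPerm 0 fun j : ZMod 3 => ![-1, 1, 0] j := by
    simp only [x, y, shiftPerm_mul]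
    congr 1
    decide
  have hx := mem_closure_pair_left x y
  have hy := mem_closure_pair_right x y
  refine .of_shiftPerm_mem hm (j₀ := 1) (j₁ := 2) ?_ ?_ ?_ hx (hτ ▸ mul_mem (mul_mem hy hx) hx)
    rfl rfl
  · exact allOrbitsSize_shiftPerm (ZMod.addOrderOf_one 3) (by decide)
  · exact allOrbitsSize_shiftPerm (ZMod.addOrderOf_one 3) (by decide)
  · rw [shiftPerm_mul]
    exact allOrbitsSize_shiftPerm ((addOrderOf_eq_iff (by norm_num)).2 (by decide)) (by decide)

theorem isNonregularDessin_244 (hm : 1 < m) :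
    IsNonregularDessin (shiftPerm (m := m) 2 fun j : ZMod 4 => ![1, 0, -1, 0] j) (shiftPerm 1 0)
      2 4 4 := by
  set x : Perm (ZMod 4 × ZMod m) := shiftPerm 2 fun j : ZMod 4 => ![1, 0, -1, 0] j
  set y : Perm (ZMod 4 × ZMod m) := shiftPerm 1 0
  have hτ : x * y * y = shiftPerm 0 fun j : ZMod 4 => ![-1, 0, 1, 0] j := by
    simp only [x, y, shiftPerm_mul]
    congr 1
    decide
  have hx := mem_closure_pair_left x y
  have hy := mem_closure_pair_right x y
  refine .of_shiftPerm_mem hm (j₀ := 2) (j₁ := 1) ?_ ?_ ?_ hy (hτ ▸ mul_mem (mul_mem hx hy) hy)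
    rfl rfl
  · exact allOrbitsSize_shiftPerm ((addOrderOf_eq_iff (by norm_num)).2 (by decide)) (by decide)
  · exact allOrbitsSize_shiftPerm (ZMod.addOrderOf_one 4) (by decide)
  · rw [shiftPerm_mul]
    exact allOrbitsSize_shiftPerm ((addOrderOf_eq_iff (by norm_num)).2 (by decide)) (by decide)

theorem isNonregularDessin_236 (hm : 1 < m) :
    IsNonregularDessin (shiftPerm (m := m) 3 fun j : ZMod 6 => ![1, 1, 0, -1, -1, 0] j)
      (shiftPerm 2 fun j : ZMod 6 => ![1, 1, 0, -1, -1, 0] j) 2 3 6 := by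
  set x : Perm (ZMod 6 × ZMod m) := shiftPerm 3 fun j : ZMod 6 => ![1, 1, 0, -1, -1, 0] j
  set y : Perm (ZMod 6 × ZMod m) := shiftPerm 2 fun j : ZMod 6 => ![1, 1, 0, -1, -1, 0] j
  obtain ⟨F, hσ⟩ : ∃ F, y * y * x = shiftPerm 1 F :=
    ⟨_, by simp only [x, y, shiftPerm_mul]; congr 1⟩
  have hτ : y * x * y * x * y = shiftPerm 0 fun j : ZMod 6 => ![1, 1, 0, -1, -1, 0] j := by
    simp only [x, y, shiftPerm_mul]
    congr 1
    decide
  have hx := mem_closure_pair_left x y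
  have hy := mem_closure_pair_right x y
  refine .of_shiftPerm_mem hm (j₀ := 0) (j₁ := 2) ?_ ?_ ?_ (hσ ▸ mul_mem (mul_mem hy hy) hx)
    (hτ ▸ mul_mem (mul_mem (mul_mem (mul_mem hy hx) hy) hx) hy) rfl rfl
  · exact allOrbitsSize_shiftPerm ((addOrderOf_eq_iff (by norm_num)).2 (by decide)) (by decide)
  · exact allOrbitsSize_shiftPerm ((addOrderOf_eq_iff (by norm_num)).2 (by decide)) (by decide)
  · rw [shiftPerm_mul]
    exact allOrbitsSize_shiftPerm ((addOrderOf_eq_iff (by norm_num)).2 (by decide)) (by decide)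

theorem hasNonregularDessin_333 {n : ℕ} (hdvd : 3 ∣ n) (hn : 3 < n) :
    HasNonregularDessin n 3 3 3 := by
  obtain ⟨m, rfl⟩ := hdvd
  have : NeZero m := ⟨by omega⟩
  exact (isNonregularDessin_333 (m := m) (by omega)).hasNonregularDessin (by simp)

theorem hasNonregularDessin_244 {n : ℕ} (hdvd : 4 ∣ n) (hn : 4 < n) :
    HasNonregularDessin n 2 4 4 := by
  obtain ⟨m, rfl⟩ := hdvd
  have : NeZero m := ⟨by omega⟩
  exact (isNonregularDessin_244 (m := m) (by omega)).hasNonregularDessin (by simp)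

theorem hasNonregularDessin_236 {n : ℕ} (hdvd : 6 ∣ n) (hn : 6 < n) :
    HasNonregularDessin n 2 3 6 := by
  obtain ⟨m, rfl⟩ := hdvd
  have : NeZero m := ⟨by omega⟩
  exact (isNonregularDessin_236 (m := m) (by omega)).hasNonregularDessin (by simp)

end Families

section Regular

theorem exists_permCongrHom_eq_finRotate {n : ℕ} (hn : 2 ≤ n) {x : Perm (Fin n)}
    (hx : allOrbitsSize x n) : ∃ e : Fin n ≃ Fin n, e.permCongrHom x = finRotate n := by
  have hsame (a b : Fin n) : x.SameCycle a b := by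
    have : permOrbit x a = Set.univ :=
      Set.eq_of_subset_of_ncard_le (Set.subset_univ _) (by simp [hx a])
    exact (this ▸ Set.mem_univ b : b ∈ permOrbit x a)
  have hmove (a : Fin n) : x a ≠ a := fun hfix => by
    have := allOrbitsSize_iff_minimalPeriod_s9.1 hx a
    rw [minimalPeriod_eq_one_iff_isFixedPt.2 hfix] at this
    omega
  have hcycle : x.IsCycle := ⟨⟨0, by omega⟩, hmove _, fun b _ => hsame _ b⟩
  have hsupp : x.support = Finset.univ :=
    Finset.eq_univ_of_forall fun a => Perm.mem_support.2 (hmove a)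
  obtain ⟨e, he⟩ := isConj_iff.1 <| hcycle.isConj (isCycle_finRotate_of_le hn)
    (by rw [hsupp, support_finRotate_of_le hn])
  exact ⟨e, by rw [← he]; ext; simp [Equiv.permCongrHom_coe, Perm.inv_def]⟩

theorem not_isNonregularDessin_finRotate {n b c : ℕ} (hn : 2 ≤ n) (k : ℕ) :
    ¬ IsNonregularDessin (finRotate n) (finRotate n ^ k) n b c := by
  intro h
  have hcl : closure {finRotate n, finRotate n ^ k} = zpowers (finRotate n) :=
    le_antisymm ((closure_le _).2 (Set.insert_subset_iff.2
        ⟨mem_zpowers _, Set.singleton_subset_iff.2 (npow_mem_zpowers _ k)⟩))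
      (zpowers_le.2 (mem_closure_pair_left _ _))
  apply h.2.2.2.2
  rw [hcl, Nat.card_zpowers, (isCycle_finRotate_of_le hn).orderOf,
    support_finRotate_of_le hn, Finset.card_univ, Nat.card_eq_fintype_card]

theorem not_hasNonregularDessin_of_mem_zpowers {n b c : ℕ} (hn : 2 ≤ n)
    (hpow : ∀ y : Perm (Fin n), allOrbitsSize y b → allOrbitsSize (finRotate n * y)⁻¹ c →
      ∃ k : Fin n, y = finRotate n ^ (k : ℕ)) :
    ¬ HasNonregularDessin n n b c := by
  rintro ⟨x, y, h⟩
  obtain ⟨e, he⟩ := exists_permCongrHom_eq_finRotate hn h.1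
  have h' := h.permCongrHom e
  rw [he] at h'
  obtain ⟨k, hk⟩ := hpow _ h'.2.1 h'.2.2.1
  rw [hk] at h'
  exact not_isNonregularDessin_finRotate hn k h'

set_option maxRecDepth 100000 in
theorem not_hasNonregularDessin_3333 : ¬ HasNonregularDessin 3 3 3 3 :=
  not_hasNonregularDessin_of_mem_zpowers (by norm_num) (by decide)

set_option maxRecDepth 100000 in
theorem not_hasNonregularDessin_4424 : ¬ HasNonregularDessin 4 4 2 4 :=
  not_hasNonregularDessin_of_mem_zpowers (by norm_num) (by decide)

set_option maxRecDepth 100000 in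
theorem not_hasNonregularDessin_6623 : ¬ HasNonregularDessin 6 6 2 3 :=
  not_hasNonregularDessin_of_mem_zpowers (by norm_num) (by decide)

end Regular

section GenusOne
variable {a b c : ℕ}

theorem two_le_of_genus_one (hb : 0 < b) (hc : 0 < c) (h : b * c + a * c + a * b = a * b * c) :
    2 ≤ a := by
  by_contra! ha
  interval_cases a <;> nlinarith

theorem le_six_of_genus_one (ha : 0 < a) (hb : 0 < b) (hc : 0 < c)
    (h : b * c + a * c + a * b = a * b * c) : a ≤ 6 := by
  have hb2 := two_le_of_genus_one (a := b) (b := a) ha hc (by linarith)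
  have hc2 := two_le_of_genus_one (a := c) (b := a) (c := b) ha hb (by linarith)
  by_contra! ha7
  obtain rfl | hb3 : b = 2 ∨ 3 ≤ b := by omega
  · obtain rfl | hc3 : c = 2 ∨ 3 ≤ c := by omega
    · omega
    · nlinarith
  obtain rfl | hc3 : c = 2 ∨ 3 ≤ c := by omega
  · nlinarith
  nlinarith [Nat.mul_le_mul_left (a * b) hc3, Nat.mul_le_mul_left (a * c) hb3, Nat.mul_pos hb hc]

theorem genus_one_cases (ha : 0 < a) (hb : 0 < b) (hc : 0 < c)
    (h : b * c + a * c + a * b = a * b * c) :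
    a = 3 ∧ b = 3 ∧ c = 3 ∨ a = 2 ∧ b = 4 ∧ c = 4 ∨ a = 4 ∧ b = 2 ∧ c = 4 ∨
      a = 4 ∧ b = 4 ∧ c = 2 ∨ a = 2 ∧ b = 3 ∧ c = 6 ∨ a = 2 ∧ b = 6 ∧ c = 3 ∨
      a = 3 ∧ b = 2 ∧ c = 6 ∨ a = 3 ∧ b = 6 ∧ c = 2 ∨ a = 6 ∧ b = 2 ∧ c = 3 ∨
      a = 6 ∧ b = 3 ∧ c = 2 := by
  have ha6 := le_six_of_genus_one ha hb hc h
  have hb6 := le_six_of_genus_one (a := b) (b := a) hb ha hc (by linarith)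
  have ha2 := two_le_of_genus_one hb hc h
  have hb2 := two_le_of_genus_one (a := b) (b := a) ha hc (by linarith)
  interval_cases a <;> interval_cases b <;> simp <;> omega

theorem hasNonregularDessin_of_lt {n : ℕ} (ha : 0 < a) (hb : 0 < b) (hc : 0 < c)
    (h : b * c + a * c + a * b = a * b * c) (hdvd : a ∣ n ∧ b ∣ n ∧ c ∣ n)
    (hlt : a < n ∧ b < n ∧ c < n) : HasNonregularDessin n a b c := by
  obtain ⟨hda, hdb, hdc⟩ := hdvd
  obtain ⟨hla, hlb, hlc⟩ := hlt
  rcases genus_one_cases ha hb hc h with ⟨rfl, rfl, rfl⟩ | ⟨rfl, rfl, rfl⟩ | ⟨rfl, rfl, rfl⟩ |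
    ⟨rfl, rfl, rfl⟩ | ⟨rfl, rfl, rfl⟩ | ⟨rfl, rfl, rfl⟩ | ⟨rfl, rfl, rfl⟩ | ⟨rfl, rfl, rfl⟩ |
    ⟨rfl, rfl, rfl⟩ | ⟨rfl, rfl, rfl⟩
  · exact hasNonregularDessin_333 hda hla
  · exact hasNonregularDessin_244 hdb hlb
  · exact (hasNonregularDessin_244 hda hla).rotate.rotate
  · exact (hasNonregularDessin_244 hda hla).rotate
  · exact hasNonregularDessin_236 hdc hlc
  · exact (hasNonregularDessin_236 hdb hlb).swap.rotate
  · exact (hasNonregularDessin_236 hdc hlc).swap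
  · exact (hasNonregularDessin_236 hdb hlb).rotate
  · exact (hasNonregularDessin_236 hda hla).rotate.rotate
  · exact (hasNonregularDessin_236 hda hla).swap.rotate.rotate

theorem lt_of_hasNonregularDessin {n : ℕ} (hn : 0 < n) (ha : 0 < a) (hb : 0 < b) (hc : 0 < c)
    (h : b * c + a * c + a * b = a * b * c) (hdvd : a ∣ n ∧ b ∣ n ∧ c ∣ n)
    (hD : HasNonregularDessin n a b c) : a < n := by
  refine lt_of_le_of_ne (Nat.le_of_dvd hn hdvd.1) ?_
  rintro rfl
  rcases genus_one_cases ha hb hc h with ⟨rfl, rfl, rfl⟩ | ⟨rfl, rfl, rfl⟩ | ⟨rfl, rfl, rfl⟩ |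
    ⟨rfl, rfl, rfl⟩ | ⟨rfl, rfl, rfl⟩ | ⟨rfl, rfl, rfl⟩ | ⟨rfl, rfl, rfl⟩ | ⟨rfl, rfl, rfl⟩ |
    ⟨rfl, rfl, rfl⟩ | ⟨rfl, rfl, rfl⟩
  · exact not_hasNonregularDessin_3333 hD
  · norm_num at hdvd
  · exact not_hasNonregularDessin_4424 hD
  · exact not_hasNonregularDessin_4424 hD.rotate
  · norm_num at hdvd
  · norm_num at hdvd
  · norm_num at hdvd
  · norm_num at hdvd
  · exact not_hasNonregularDessin_6623 hD
  · exact not_hasNonregularDessin_6623 hD.swap.rotate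

end GenusOne

theorem genus_one_nonregular_iff_general (n a b c p q r : ℕ) (hn : 0 < n)
    (ha : 0 < a) (hb : 0 < b) (hc : 0 < c)
    (hpa : n = p * a) (hqb : n = q * b) (hrc : n = r * c)
    (hgenus : p + q + r = n) :
    (a < n ∧ b < n ∧ c < n) ↔
      ∃ x y : Equiv.Perm (Fin n),
        allOrbitsSize x a ∧ allOrbitsSize y b ∧ allOrbitsSize (x * y)⁻¹ c ∧
        (∀ e f : Fin n,
          ∃ g ∈ Subgroup.closure ({x, y} : Set (Equiv.Perm (Fin n))), g e = f) ∧
        Nat.card (Subgroup.closure ({x, y} : Set (Equiv.Perm (Fin n)))) ≠ n := by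
  have h : b * c + a * c + a * b = a * b * c := by
    refine Nat.eq_of_mul_eq_mul_left hn ?_
    calc n * (b * c + a * c + a * b) = (p * a) * (b * c) + (q * b) * (a * c) + (r * c) * (a * b) := by
          rw [← hpa, ← hqb, ← hrc]; ring
      _ = n * (a * b * c) := by rw [← hgenus]; ring
  have hdvd : a ∣ n ∧ b ∣ n ∧ c ∣ n :=
    ⟨Dvd.intro_left p hpa.symm, Dvd.intro_left q hqb.symm, Dvd.intro_left r hrc.symm⟩
  have key : (a < n ∧ b < n ∧ c < n) ↔ HasNonregularDessin n a b c :=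
    ⟨hasNonregularDessin_of_lt ha hb hc h hdvd, fun hD =>
      ⟨lt_of_hasNonregularDessin hn ha hb hc h hdvd hD,
        lt_of_hasNonregularDessin hn hb hc ha (by linarith) ⟨hdvd.2.1, hdvd.2.2, hdvd.1⟩ hD.rotate,
        lt_of_hasNonregularDessin hn hc ha hb (by linarith) ⟨hdvd.2.2, hdvd.1, hdvd.2.1⟩
          hD.rotate.rotate⟩⟩
  simpa only [HasNonregularDessin, IsNonregularDessin, Nat.card_eq_fintype_card, Fintype.card_fin]
    using key

/-- A uniform passport of genus 1 admits a non-regular dessin iff it contains no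
part of type `n^1`. -/
theorem genus_one_nonregular_iff (n a b c p q r : ℕ) (hn : 0 < n)
    (ha : 0 < a) (hb : 0 < b) (hc : 0 < c) (hp : 0 < p) (hq : 0 < q) (hr : 0 < r)
    (hpa : n = p * a) (hqb : n = q * b) (hrc : n = r * c)
    (hgenus : p + q + r = n) :
    (a < n ∧ b < n ∧ c < n) ↔
      ∃ x y : Equiv.Perm (Fin n),
        allOrbitsSize x a ∧ allOrbitsSize y b ∧ allOrbitsSize (x * y)⁻¹ c ∧
        (∀ e f : Fin n,
          ∃ g ∈ Subgroup.closure ({x, y} : Set (Equiv.Perm (Fin n))), g e = f) ∧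
        Nat.card (Subgroup.closure ({x, y} : Set (Equiv.Perm (Fin n)))) ≠ n :=
  genus_one_nonregular_iff_general n a b c p q r hn ha hb hc hpa hqb hrc hgenus
end
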